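/- arXiv:1901.02220 — 6 statements merged into one kernel-verified Lean document; each statement's English description precedes it below -/
import Mathlib

section
/- Let g : ℝ → ℝ be defined by g(x) = 2·max(x,0) − 4·max(x−1/2,0) + 2·max(x−1,0), and for s ∈ ℕ let g_s denote the s-fold composition of g with itself (g_1 = g). Then for every s ∈ ℕ and every x ∈ [0,1], g_s(x) = ∑_{k=0}^{2^{s−1}−1} g(2^{s−1}·x − k). -/
/-!
Write `S n x = ∑_{k < 2ⁿ} g(2ⁿx − k)`. Splitting the sum in halves gives
`S (n+1) x = S n (2x) + S n (2x − 1)`. Each `S n` vanishes outside `(0, 1)` and is symmetric under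
`x ↦ 1 − x`, because `g` is; so on `[0, 1/2]` only the first half survives and equals `S n (g x)`,
and on `[1/2, 1]` only the second half survives and equals `S n (2 − 2x) = S n (g x)`.
Hence `S n ∘ g = S (n+1)` everywhere, and `g_{n+1} = S n` by induction.
-/

/-- The "hat function" `g(x) = 2·max(x,0) − 4·max(x−1/2,0) + 2·max(x−1,0)`. -/
noncomputable def hatg (x : ℝ) : ℝ :=
  2 * max x 0 - 4 * max (x - 1/2) 0 + 2 * max (x - 1) 0

open Finset

lemma hatg_of_nonpos {t : ℝ} (h : t ≤ 0) : hatg t = 0 := by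
  unfold hatg
  rw [max_eq_right h, max_eq_right (by linarith), max_eq_right (by linarith)]
  ring

lemma hatg_of_one_le {t : ℝ} (h : 1 ≤ t) : hatg t = 0 := by
  unfold hatg
  rw [max_eq_left (by linarith), max_eq_left (by linarith), max_eq_left (by linarith)]
  ring

lemma hatg_of_le_half {t : ℝ} (h0 : 0 ≤ t) (h1 : t ≤ 1/2) : hatg t = 2 * t := by
  unfold hatg
  rw [max_eq_left h0, max_eq_right (by linarith), max_eq_right (by linarith)]
  ring

lemma hatg_of_half_le {t : ℝ} (h0 : 1/2 ≤ t) (h1 : t ≤ 1) : hatg t = 2 - 2 * t := by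
  unfold hatg
  rw [max_eq_left (by linarith), max_eq_left (by linarith), max_eq_right (by linarith)]
  ring

lemma hatg_one_sub (t : ℝ) : hatg (1 - t) = hatg t := by
  rcases le_total t 0 with h0 | h0
  · rw [hatg_of_nonpos h0, hatg_of_one_le (by linarith)]
  rcases le_total t (1/2) with h1 | h1
  · rw [hatg_of_le_half h0 h1, hatg_of_half_le (by linarith) (by linarith)]; ring
  rcases le_total t 1 with h2 | h2
  · rw [hatg_of_half_le h1 h2, hatg_of_le_half (by linarith) (by linarith)]; ring
  · rw [hatg_of_one_le h2, hatg_of_nonpos (by linarith)]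

noncomputable def sawtoothSum (n : ℕ) (x : ℝ) : ℝ :=
  ∑ k ∈ range (2 ^ n), hatg ((2 : ℝ) ^ n * x - k)

lemma sawtoothSum_zero (x : ℝ) : sawtoothSum 0 x = hatg x := by
  simp [sawtoothSum]

lemma sawtoothSum_succ (n : ℕ) (x : ℝ) :
    sawtoothSum (n + 1) x = sawtoothSum n (2 * x) + sawtoothSum n (2 * x - 1) := by
  unfold sawtoothSum
  rw [pow_succ, Nat.mul_two, sum_range_add]
  congr 1 <;> refine sum_congr rfl fun k _ => congr_arg hatg ?_ <;> push_cast <;> ring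

lemma sawtoothSum_of_nonpos (n : ℕ) {x : ℝ} (hx : x ≤ 0) : sawtoothSum n x = 0 :=
  sum_eq_zero fun k _ => hatg_of_nonpos <| by
    nlinarith [pow_pos (two_pos : (0 : ℝ) < 2) n, (Nat.cast_nonneg k : (0 : ℝ) ≤ k)]

lemma sawtoothSum_one_sub (n : ℕ) (x : ℝ) : sawtoothSum n (1 - x) = sawtoothSum n x := by
  unfold sawtoothSum
  rw [← sum_range_reflect]
  refine sum_congr rfl fun k hk => ?_
  have hk : k + 1 ≤ 2 ^ n := mem_range.mp hk
  rw [← hatg_one_sub, Nat.cast_sub (by omega), Nat.cast_sub Nat.one_le_two_pow]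
  push_cast
  ring_nf

lemma sawtoothSum_of_one_le (n : ℕ) {x : ℝ} (hx : 1 ≤ x) : sawtoothSum n x = 0 := by
  rw [← sawtoothSum_one_sub, sawtoothSum_of_nonpos n (by linarith)]

lemma sawtoothSum_hatg (n : ℕ) (x : ℝ) : sawtoothSum n (hatg x) = sawtoothSum (n + 1) x := by
  rcases le_total x 0 with h0 | h0
  · rw [hatg_of_nonpos h0, sawtoothSum_of_nonpos n le_rfl, sawtoothSum_of_nonpos _ h0]
  rcases le_total x (1/2) with h1 | h1
  · rw [hatg_of_le_half h0 h1, sawtoothSum_succ, sawtoothSum_of_nonpos n (x := 2 * x - 1)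
      (by linarith), add_zero]
  rcases le_total x 1 with h2 | h2
  · rw [hatg_of_half_le h1 h2, sawtoothSum_succ, sawtoothSum_of_one_le n (x := 2 * x)
      (by linarith), zero_add, ← sawtoothSum_one_sub n (2 * x - 1)]
    ring_nf
  · rw [hatg_of_one_le h2, sawtoothSum_of_nonpos n le_rfl, sawtoothSum_of_one_le _ h2]

lemma iterate_hatg_succ (n : ℕ) (x : ℝ) : hatg^[n + 1] x = sawtoothSum n x := by
  induction n generalizing x with
  | zero => rw [sawtoothSum_zero]; rfl
  | succ n ih => rw [Function.iterate_succ_apply, ih, sawtoothSum_hatg]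

theorem stmt0_general (s : ℕ) (hs : 1 ≤ s) (x : ℝ) :
    hatg^[s] x = ∑ k ∈ Finset.range (2 ^ (s - 1)), hatg ((2:ℝ) ^ (s - 1) * x - k) := by
  obtain ⟨n, rfl⟩ := Nat.exists_eq_add_of_le' hs
  exact iterate_hatg_succ n x

/-- For every `s ≥ 1` and every `x ∈ [0,1]`, the `s`-fold composition `g_s = g∘⋯∘g`
satisfies `g_s(x) = ∑_{k=0}^{2^{s−1}−1} g(2^{s−1}·x − k)`. -/
theorem stmt0 (s : ℕ) (hs : 1 ≤ s) (x : ℝ) (hx : x ∈ Set.Icc (0:ℝ) 1) :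
    hatg^[s] x = ∑ k ∈ Finset.range (2 ^ (s - 1)), hatg ((2:ℝ) ^ (s - 1) * x - k) :=
  stmt0_general s hs x
end

section
/- Let ‖·‖ and ‖·‖' be two norms on ℝ^d with unit balls B and B' respectively. Then for every ε > 0, the ε-covering number of B with respect to ‖·‖' satisfies (1/ε)^d · vol(B)/vol(B') ≤ N(ε; B, ‖·‖') ≤ vol((2/ε)·B + B') / vol(B'), where + denotes Minkowski sum and vol denotes Lebesgue measure. -/
/-!
Lower bound: the translates `x + ε • B'` cover `B`, and each has volume `ε ^ d * vol B'`.
Upper bound: a maximal `ε`-separated subset `S` of `B` for `‖·‖'` is an `ε`-cover of `B`, and the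
translates `(2 / ε) • x + B'`, `x ∈ S`, are pairwise disjoint subsets of `(2 / ε) • B + B'`, so
`#S * vol B' ≤ vol ((2 / ε) • B + B')`; this bound on separated sets is also what makes a maximal
one exist. Finite dimensionality makes both norms continuous, so their unit balls are compact with
nonempty interior and all the volumes involved are positive and finite.
-/

open MeasureTheory ENNReal Pointwise Module

theorem Finset.exists_card_max_of_card_le {α : Type*} {P : Finset α → Prop} (h₀ : P ∅) {M : ℕ}
    (hM : ∀ s, P s → s.card ≤ M) : ∃ s, P s ∧ ∀ t, P t → t.card ≤ s.card := by
  classical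
  obtain ⟨s, hs, hcard⟩ := Nat.findGreatest_spec (P := fun n => ∃ s, P s ∧ s.card = n)
    (Nat.zero_le M) ⟨∅, h₀, rfl⟩
  exact ⟨s, hs, fun t ht => hcard ▸ Nat.le_findGreatest (hM t ht) ⟨t, ht, rfl⟩⟩

theorem MeasureTheory.measure_singleton_add {G : Type*} [AddGroup G] [MeasurableSpace G]
    [MeasurableAdd G] (μ : Measure G) [μ.IsAddLeftInvariant] (x : G) (s : Set G) :
    μ ({x} + s) = μ s := by
  rw [Set.singleton_add]
  exact measure_vadd μ x s

namespace Seminorm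

section Module

variable {𝕜 E : Type*} [NormedField 𝕜] [AddCommGroup E] [Module 𝕜 E] (p : Seminorm 𝕜 E)

theorem singleton_add_closedBall_zero (x : E) (r : ℝ) :
    {x} + p.closedBall 0 r = p.closedBall x r := by
  rw [Set.singleton_add]
  exact (p.vadd_closedBall).trans (by rw [vadd_eq_add, add_zero])

theorem singleton_add_smul_closedBall_zero (x : E) {k : 𝕜} (hk : k ≠ 0) (r : ℝ) :
    {x} + k • p.closedBall 0 r = p.closedBall x (‖k‖ * r) := by
  rw [smul_closedBall_zero (norm_pos_iff.2 hk), singleton_add_closedBall_zero]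

theorem disjoint_closedBall_of_add_lt {x y : E} {r₁ r₂ : ℝ} (h : r₁ + r₂ < p (x - y)) :
    Disjoint (p.closedBall x r₁) (p.closedBall y r₂) := by
  refine Set.disjoint_left.2 fun z hzx hzy => h.not_ge ?_
  rw [mem_closedBall] at hzx hzy
  calc p (x - y) = p ((z - y) - (z - x)) := by congr 1; abel
    _ ≤ p (z - y) + p (z - x) := map_sub_le_add p _ _
    _ ≤ r₁ + r₂ := by linarith

theorem exists_pairwise_lt_subset_iUnion_closedBall {A : Set E} {ε : ℝ} (hε : 0 ≤ ε) {M : ℕ}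
    (hM : ∀ S : Finset E, ↑S ⊆ A → (S : Set E).Pairwise (fun x y => ε < p (x - y)) → S.card ≤ M) :
    ∃ S : Finset E, ↑S ⊆ A ∧ (S : Set E).Pairwise (fun x y => ε < p (x - y)) ∧
      A ⊆ ⋃ x ∈ S, p.closedBall x ε := by
  classical
  obtain ⟨S, ⟨hSA, hS⟩, hmax⟩ := Finset.exists_card_max_of_card_le
    (P := fun S : Finset E => ↑S ⊆ A ∧ (S : Set E).Pairwise fun x y => ε < p (x - y))
    ⟨by simp, by simp⟩ fun S hS => hM S hS.1 hS.2
  refine ⟨S, hSA, hS, fun y hy => ?_⟩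
  by_contra hcov
  have hfar : ∀ x ∈ S, ε < p (y - x) := fun x hx =>
    lt_of_not_ge fun h => hcov (Set.mem_biUnion hx (p.mem_closedBall.2 h))
  have hyS : y ∉ S := fun h => (hfar y h).not_ge (by simpa using hε)
  have hins := hmax (insert y S) ⟨by simpa [Set.insert_subset_iff] using ⟨hy, hSA⟩,
    by simpa [Set.pairwise_insert, map_sub_rev p _ y] using ⟨hS, fun x hx _ => hfar x hx⟩⟩
  rw [Finset.card_insert_of_notMem hyS] at hins
  omega

end Module

section FiniteDimensional

variable {E : Type*} [NormedAddCommGroup E] [NormedSpace ℝ E] [FiniteDimensional ℝ E]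
  (p : Seminorm ℝ E)

theorem continuous_of_finiteDimensional : Continuous p :=
  continuousOn_univ.1 (p.convexOn.continuousOn isOpen_univ)

theorem isOpen_ball_of_finiteDimensional (x : E) (r : ℝ) : IsOpen (p.ball x r) :=
  isOpen_lt (p.continuous_of_finiteDimensional.comp (continuous_id.sub continuous_const))
    continuous_const

theorem isClosed_closedBall_of_finiteDimensional (x : E) (r : ℝ) : IsClosed (p.closedBall x r) :=
  isClosed_le (p.continuous_of_finiteDimensional.comp (continuous_id.sub continuous_const))
    continuous_const

theorem exists_pos_mul_norm_le (hp : ∀ x, p x = 0 → x = 0) : ∃ c > 0, ∀ x, c * ‖x‖ ≤ p x := by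
  rcases subsingleton_or_nontrivial E with hE | hE
  · exact ⟨1, one_pos, fun x => by simp [Subsingleton.elim x 0]⟩
  obtain ⟨z, hz, hmin⟩ := (isCompact_sphere (0 : E) 1).exists_isMinOn
    (NormedSpace.sphere_nonempty.2 zero_le_one) p.continuous_of_finiteDimensional.continuousOn
  have hz₀ : z ≠ 0 := ne_zero_of_mem_sphere one_ne_zero ⟨z, hz⟩
  refine ⟨p z, (apply_nonneg p z).lt_of_ne fun h => hz₀ (hp z h.symm), fun x => ?_⟩
  rcases eq_or_ne x 0 with rfl | hx
  · simp
  have hx' : ‖x‖ ≠ 0 := norm_ne_zero_iff.2 hx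
  have hu : ‖x‖⁻¹ • x ∈ Metric.sphere (0 : E) 1 := by simp [norm_smul, hx']
  calc p z * ‖x‖ ≤ p (‖x‖⁻¹ • x) * ‖x‖ := by gcongr; exact hmin hu
    _ = p x := by rw [map_smul_eq_mul, norm_inv, norm_norm]; field_simp

theorem isCompact_closedBall (hp : ∀ x, p x = 0 → x = 0) (x : E) (r : ℝ) :
    IsCompact (p.closedBall x r) := by
  obtain ⟨c, hc, hpc⟩ := p.exists_pos_mul_norm_le hp
  refine Metric.isCompact_of_isClosed_isBounded (p.isClosed_closedBall_of_finiteDimensional x r)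
    (Metric.isBounded_closedBall (x := x) (r := r / c) |>.subset fun y hy => ?_)
  rw [mem_closedBall] at hy
  rw [Metric.mem_closedBall, dist_eq_norm, le_div_iff₀ hc, mul_comm]
  exact (hpc _).trans hy

theorem measure_closedBall_pos [MeasurableSpace E] (μ : Measure E) [μ.IsOpenPosMeasure] (x : E)
    {r : ℝ} (hr : 0 < r) : 0 < μ (p.closedBall x r) :=
  ((p.isOpen_ball_of_finiteDimensional x r).measure_pos μ ⟨x, p.mem_ball_self hr⟩).trans_le
    (measure_mono (p.ball_subset_closedBall x r))

end FiniteDimensional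

end Seminorm

section Covering

variable {E : Type*} [NormedAddCommGroup E] [NormedSpace ℝ E] [FiniteDimensional ℝ E]
  [MeasurableSpace E] [BorelSpace E] (μ : Measure E) [μ.IsAddHaarMeasure]

theorem addHaar_le_card_mul_of_subset_iUnion {A K : Set E} {S : Finset E} {r : ℝ} (hr : 0 ≤ r)
    (hS : A ⊆ ⋃ x ∈ S, {x} + r • K) :
    μ A ≤ S.card * (ENNReal.ofReal (r ^ finrank ℝ E) * μ K) :=
  calc μ A ≤ μ (⋃ x ∈ S, {x} + r • K) := measure_mono hS
    _ ≤ ∑ x ∈ S, μ ({x} + r • K) := measure_biUnion_finset_le S _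
    _ = S.card * (ENNReal.ofReal (r ^ finrank ℝ E) * μ K) := by
      simp only [measure_singleton_add, Measure.addHaar_smul_of_nonneg μ hr, Finset.sum_const,
        nsmul_eq_mul]

theorem ofReal_inv_pow_mul_addHaar_div_le_card {A K : Set E} (hK₀ : μ K ≠ 0) (hK : μ K ≠ ⊤)
    {S : Finset E} {r : ℝ} (hr : 0 < r) (hS : A ⊆ ⋃ x ∈ S, {x} + r • K) :
    ENNReal.ofReal ((1 / r) ^ finrank ℝ E) * μ A / μ K ≤ S.card := by
  rw [ENNReal.div_le_iff hK₀ hK]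
  calc ENNReal.ofReal ((1 / r) ^ finrank ℝ E) * μ A
      ≤ ENNReal.ofReal ((1 / r) ^ finrank ℝ E) *
          (S.card * (ENNReal.ofReal (r ^ finrank ℝ E) * μ K)) := by
        gcongr; exact addHaar_le_card_mul_of_subset_iUnion μ hr.le hS
    _ = ENNReal.ofReal ((1 / r) ^ finrank ℝ E * r ^ finrank ℝ E) * (S.card * μ K) := by
        rw [ENNReal.ofReal_mul (by positivity)]; ring
    _ = S.card * μ K := by
        rw [← mul_pow, one_div_mul_cancel hr.ne', one_pow, ENNReal.ofReal_one, one_mul]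

theorem card_mul_addHaar_closedBall_le (q : Seminorm ℝ E) {A : Set E} {S : Finset E}
    (hSA : ↑S ⊆ A) {ε : ℝ} (hε : 0 < ε) (hS : (S : Set E).Pairwise fun x y => ε < q (x - y)) :
    S.card * μ (q.closedBall 0 1) ≤ μ ((2 / ε) • A + q.closedBall 0 1) := by
  have hdisj : (S : Set E).PairwiseDisjoint fun x => {(2 / ε) • x} + q.closedBall 0 1 := by
    intro x hx y hy hxy
    simp only [Function.onFun, q.singleton_add_closedBall_zero]
    apply q.disjoint_closedBall_of_add_lt
    rw [← smul_sub, map_smul_eq_mul, Real.norm_of_nonneg (by positivity)]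
    calc (1 : ℝ) + 1 = 2 / ε * ε := by field_simp; norm_num
      _ < 2 / ε * q (x - y) := by gcongr; exact hS hx hy hxy
  have hsub : (⋃ x ∈ S, {(2 / ε) • x} + q.closedBall 0 1) ⊆ (2 / ε) • A + q.closedBall 0 1 :=
    Set.iUnion₂_subset fun x hx => Set.add_subset_add_right
      (Set.singleton_subset_iff.2 (Set.smul_mem_smul_set (hSA hx)))
  calc S.card * μ (q.closedBall 0 1) = ∑ x ∈ S, μ ({(2 / ε) • x} + q.closedBall 0 1) := by
        simp only [measure_singleton_add, Finset.sum_const, nsmul_eq_mul]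
    _ = μ (⋃ x ∈ S, {(2 / ε) • x} + q.closedBall 0 1) := by
        refine (measure_biUnion_finset hdisj fun x _ => ?_).symm
        rw [q.singleton_add_closedBall_zero]
        exact (q.isClosed_closedBall_of_finiteDimensional _ _).measurableSet
    _ ≤ μ ((2 / ε) • A + q.closedBall 0 1) := measure_mono hsub

theorem exists_subset_iUnion_card_le_addHaar_div (q : Seminorm ℝ E) (hq : ∀ x, q x = 0 → x = 0)
    {A : Set E} (hA : IsCompact A) {ε : ℝ} (hε : 0 < ε) :
    ∃ S : Finset E, ↑S ⊆ A ∧ A ⊆ ⋃ x ∈ S, {x} + ε • q.closedBall 0 1 ∧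
      (S.card : ℝ≥0∞) ≤ μ ((2 / ε) • A + q.closedBall 0 1) / μ (q.closedBall 0 1) := by
  set Q := μ ((2 / ε) • A + q.closedBall 0 1) / μ (q.closedBall 0 1)
  have hK₀ : μ (q.closedBall 0 1) ≠ 0 := (q.measure_closedBall_pos μ 0 one_pos).ne'
  have hK : μ (q.closedBall 0 1) ≠ ⊤ := (q.isCompact_closedBall hq 0 1).measure_lt_top.ne
  have hQ : Q ≠ ⊤ := ENNReal.div_ne_top
    ((hA.smul _).add (q.isCompact_closedBall hq 0 1)).measure_lt_top.ne hK₀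
  have hpack : ∀ S : Finset E, ↑S ⊆ A → (S : Set E).Pairwise (fun x y => ε < q (x - y)) →
      (S.card : ℝ≥0∞) ≤ Q := fun S hSA hS =>
    (ENNReal.le_div_iff_mul_le (.inl hK₀) (.inl hK)).2
      (card_mul_addHaar_closedBall_le μ q hSA hε hS)
  obtain ⟨S, hSA, hS, hcov⟩ := q.exists_pairwise_lt_subset_iUnion_closedBall hε.le
    (M := ⌊Q.toReal⌋₊) fun S hSA hS =>
      Nat.le_floor (by simpa using ENNReal.toReal_mono hQ (hpack S hSA hS))
  refine ⟨S, hSA, ?_, hpack S hSA hS⟩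
  simpa only [q.singleton_add_smul_closedBall_zero _ hε.ne', Real.norm_of_nonneg hε.le, mul_one]
    using hcov

end Covering

/-- Volume bounds on covering numbers (Wainwright, Lemma 5.7).  Let `‖·‖ = N₁` and
`‖·‖' = N₂` be two norms on `ℝ^d` with unit balls `B` and `B'`.  Then for every `ε > 0`
the ε-covering number `N(ε; B, ‖·‖')` of `B` in the norm `‖·‖'` (the minimal number of
points `x₁,…,x_N ∈ B` with `B ⊆ ∪_j (x_j + ε·B')`) satisfies
`(1/ε)^d · vol(B)/vol(B') ≤ N(ε; B, ‖·‖') ≤ vol((2/ε)·B + B')/vol(B')`,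
expressed here as: every such covering has at least `(1/ε)^d · vol(B)/vol(B')` points, and
there exists such a covering with at most `vol((2/ε)·B + B')/vol(B')` points. -/
theorem stmt6 (d : ℕ) (N₁ N₂ : (Fin d → ℝ) → ℝ)
    (hN₁0 : ∀ x, N₁ x = 0 ↔ x = 0) (hN₁h : ∀ (a : ℝ) x, N₁ (a • x) = |a| * N₁ x)
    (hN₁t : ∀ x y, N₁ (x + y) ≤ N₁ x + N₁ y)
    (hN₂0 : ∀ x, N₂ x = 0 ↔ x = 0) (hN₂h : ∀ (a : ℝ) x, N₂ (a • x) = |a| * N₂ x)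
    (hN₂t : ∀ x y, N₂ (x + y) ≤ N₂ x + N₂ y)
    (B B' : Set (Fin d → ℝ)) (hB : B = {x | N₁ x ≤ 1}) (hB' : B' = {x | N₂ x ≤ 1})
    (ε : ℝ) (hε : 0 < ε) :
    (∀ S : Finset (Fin d → ℝ), ↑S ⊆ B → B ⊆ ⋃ x ∈ S, {x} + ε • B' →
      ENNReal.ofReal ((1/ε) ^ d) * volume B / volume B' ≤ (S.card : ℝ≥0∞)) ∧
    (∃ S : Finset (Fin d → ℝ), ↑S ⊆ B ∧ B ⊆ ⋃ x ∈ S, {x} + ε • B' ∧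
      (S.card : ℝ≥0∞) ≤ volume ((2/ε) • B + B') / volume B') := by
  let p₁ : Seminorm ℝ (Fin d → ℝ) := .of N₁ hN₁t (by simpa only [Real.norm_eq_abs] using hN₁h)
  let p₂ : Seminorm ℝ (Fin d → ℝ) := .of N₂ hN₂t (by simpa only [Real.norm_eq_abs] using hN₂h)
  have hB₁ : B = p₁.closedBall 0 1 := by rw [hB, Seminorm.closedBall_zero_eq]; rfl
  have hB₂ : B' = p₂.closedBall 0 1 := by rw [hB', Seminorm.closedBall_zero_eq]; rfl
  have hp₂ : ∀ x, p₂ x = 0 → x = 0 := fun x => (hN₂0 x).1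
  subst hB₁ hB₂
  refine ⟨fun S _ hS => ?_, exists_subset_iUnion_card_le_addHaar_div volume p₂ hp₂
    (p₁.isCompact_closedBall (fun x => (hN₁0 x).1) 0 1) hε⟩
  simpa only [Module.finrank_fin_fun] using ofReal_inv_pow_mul_addHaar_div_le_card volume
    (p₂.measure_closedBall_pos volume 0 one_pos).ne'
    (p₂.isCompact_closedBall hp₂ 0 1).measure_lt_top.ne hε hS
end

section
/- Let f : ℝ → ℝ be a continuous, non-constant, u-periodic function, and let h : ℝ → ℝ be a piecewise linear function with at most k linear pieces. If a ∈ ℕ is even and a/2 > k, then sup_{x ∈ [0,u]} |f(a·x) − h(x)| ≥ ξ(f), where ξ(f) = sup_{δ ∈ [0,u)} inf_{c,d ∈ ℝ} sup_{x ∈ [δ,δ+u]} |f(x) − (cx+d)| > 0. -/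
/-!
Of the `k + 1` grid points `2 m u / a`, `m ≤ k`, which lie in `[0, u]` because `2 k < a`, two
fall into the same piece of `h`, so `h` is affine on some `[2 m u / a, 2 (m + 1) u / a]`. There
`x ↦ f (a x)` runs through two full periods of `f`, and the substitution `y = a x - 2 m u` maps
a subinterval onto any window `[δ, δ + u]` with `0 ≤ δ < u`, turning `h` into an affine
function of `y`. So the error of `h` is at least the distance of `f` from the affine functions
on every such window. That distance is positive on `[0, u]`: an affine function within `S` of
`f` at `0`, `u` and a point `p` with `f p ≠ f 0 = f u` forces `|f p - f 0| ≤ 2 S`.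
-/

open Set Bornology

/-- `ξ(f)` is the supremum of `affineGap f δ (δ + u)` over `δ ∈ [0, u)`. -/
noncomputable def affineGap (f : ℝ → ℝ) (s t : ℝ) : ℝ :=
  ⨅ c : ℝ, ⨅ d : ℝ, ⨆ x : Icc s t, |f x - (c * x + d)|

theorem affineGap_nonneg (f : ℝ → ℝ) (s t : ℝ) : 0 ≤ affineGap f s t :=
  Real.iInf_nonneg fun _ => Real.iInf_nonneg fun _ => Real.iSup_nonneg fun _ => abs_nonneg _

theorem affineGap_le {f : ℝ → ℝ} {s t c d B : ℝ} (hst : s ≤ t)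
    (hB : ∀ x ∈ Icc s t, |f x - (c * x + d)| ≤ B) : affineGap f s t ≤ B := by
  have : Nonempty (Icc s t) := ⟨⟨s, left_mem_Icc.2 hst⟩⟩
  have hbdd : ∀ c, BddBelow (range fun d : ℝ => ⨆ x : Icc s t, |f x - (c * x + d)|) :=
    fun _ => ⟨0, by rintro _ ⟨_, rfl⟩; exact Real.iSup_nonneg fun _ => abs_nonneg _⟩
  calc affineGap f s t ≤ ⨅ d : ℝ, ⨆ x : Icc s t, |f x - (c * x + d)| :=
        ciInf_le ⟨0, by rintro _ ⟨_, rfl⟩; exact Real.iInf_nonneg fun _ =>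
          Real.iSup_nonneg fun _ => abs_nonneg _⟩ c
    _ ≤ ⨆ x : Icc s t, |f x - (c * x + d)| := ciInf_le (hbdd c) d
    _ ≤ B := ciSup_le fun x => hB x x.2

theorem half_abs_sub_le_affineGap {f : ℝ → ℝ} {s t p : ℝ} (hf : ContinuousOn f (Icc s t))
    (hp : p ∈ Icc s t) (hfst : f s = f t) : |f p - f s| / 2 ≤ affineGap f s t := by
  rcases hp.1.eq_or_lt with rfl | hsp
  · simpa using affineGap_nonneg f _ t
  have hts : 0 < t - s := sub_pos.2 (hsp.trans_le hp.2)
  refine le_ciInf fun c => le_ciInf fun d => ?_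
  set e := fun x => f x - (c * x + d)
  set S := ⨆ x : Icc s t, |e x|
  obtain ⟨C, hC⟩ := isCompact_Icc.exists_bound_of_continuousOn
    (hf.sub (by fun_prop : Continuous fun x => c * x + d).continuousOn).abs
  have hbdd : BddAbove (range fun x : Icc s t => |e x|) :=
    ⟨C, by rintro _ ⟨x, rfl⟩; simpa using hC x x.2⟩
  have herr : ∀ x ∈ Icc s t, |e x| ≤ S := fun x hx => le_ciSup hbdd ⟨x, hx⟩
  have hdiff : ∀ x ∈ Icc s t, |e p - e x| ≤ 2 * S := fun x hx => by
    linarith [abs_sub (e p) (e x), herr p hp, herr x hx]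
  have key : (t - s) * (f p - f s) = (t - p) * (e p - e s) + (p - s) * (e p - e t) := by
    simp only [e]; rw [← hfst]; ring
  have : (t - s) * |f p - f s| ≤ (t - s) * (2 * S) := by
    rw [← abs_of_pos hts, ← abs_mul, key, abs_of_pos hts]
    calc |(t - p) * (e p - e s) + (p - s) * (e p - e t)|
        ≤ (t - p) * |e p - e s| + (p - s) * |e p - e t| := by
          refine (abs_add_le _ _).trans_eq ?_
          rw [abs_mul, abs_mul, abs_of_nonneg (sub_nonneg.2 hp.2), abs_of_pos (sub_pos.2 hsp)]
      _ ≤ (t - p) * (2 * S) + (p - s) * (2 * S) := by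
          gcongr
          · linarith [hp.2]
          · exact hdiff s (left_mem_Icc.2 (hsp.le.trans hp.2))
          · exact hdiff t (right_mem_Icc.2 (hsp.le.trans hp.2))
      _ = (t - s) * (2 * S) := by ring
  linarith [le_of_mul_le_mul_left this hts]

theorem affineGap_le_of_dilation {f h : ℝ → ℝ} {a T s t B : ℝ} (ha : 0 < a) (hst : s ≤ t)
    (hT : Function.Periodic f T)
    (hh : ∃ c d : ℝ, ∀ x ∈ Icc ((s + T) / a) ((t + T) / a), h x = c * x + d)
    (hB : ∀ x ∈ Icc ((s + T) / a) ((t + T) / a), |f (a * x) - h x| ≤ B) :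
    affineGap f s t ≤ B := by
  obtain ⟨c, d, hcd⟩ := hh
  refine affineGap_le (c := c / a) (d := d + c * T / a) hst fun y hy => ?_
  have hx : (y + T) / a ∈ Icc ((s + T) / a) ((t + T) / a) :=
    ⟨by gcongr; exact hy.1, by gcongr; exact hy.2⟩
  have hfy : f (a * ((y + T) / a)) = f y := by rw [mul_div_cancel₀ _ ha.ne', hT]
  have hhy : h ((y + T) / a) = c / a * y + (d + c * T / a) := by rw [hcd _ hx]; ring
  simpa only [hfy, hhy] using hB _ hx

theorem exists_Icc_subset_of_iUnion_eq_univ {α ι : Type*} [Preorder α] [Fintype ι]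
    {I : ι → Set α} (hcover : ⋃ j, I j = univ) (hconn : ∀ j, (I j).OrdConnected)
    {t : ℕ → α} (ht : Monotone t) {n : ℕ} (hn : Fintype.card ι ≤ n) :
    ∃ m < n, ∃ j, Icc (t m) (t (m + 1)) ⊆ I j := by
  have hpiece : ∀ i : Fin (n + 1), ∃ j, t i ∈ I j := fun i => mem_iUnion.1 (hcover ▸ mem_univ _)
  choose σ hσ using hpiece
  obtain ⟨p, q, hpq, hσpq⟩ := Fintype.exists_ne_map_eq_of_card_lt σ (by simpa using hn)
  wlog hlt : p < q generalizing p q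
  · exact this q p hpq.symm hσpq.symm (hpq.lt_or_gt.resolve_left hlt)
  refine ⟨p, by omega, σ p, ?_⟩
  exact (Icc_subset_Icc_right (ht (Nat.succ_le_of_lt hlt))).trans
    ((hconn _).out (hσ p) (hσpq ▸ hσ q))

theorem bddAbove_range_abs_sub {α : Type*} {s : Set α} {F G : α → ℝ} (hF : IsBounded (F '' s))
    (hG : IsBounded (G '' s)) : BddAbove (range fun x : s => |F x - G x|) := by
  obtain ⟨M, hM⟩ := isBounded_iff_forall_norm_le.1 hF
  obtain ⟨C, hC⟩ := isBounded_iff_forall_norm_le.1 hG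
  refine ⟨M + C, ?_⟩
  rintro _ ⟨x, rfl⟩
  have hFx := hM _ (mem_image_of_mem F x.2)
  have hGx := hC _ (mem_image_of_mem G x.2)
  rw [Real.norm_eq_abs] at hFx hGx
  linarith [abs_sub (F x) (G x)]

theorem affineGap_le_iSup_of_affineOn {f h : ℝ → ℝ} {u δ : ℝ} {a m : ℕ}
    (hP : Function.Periodic f u) (hma : 2 * (m + 1) ≤ a)
    (hh : ∃ c d : ℝ, ∀ x ∈ Icc (2 * (m : ℝ) * u / a) (2 * ((m + 1 : ℕ) : ℝ) * u / a),
      h x = c * x + d)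
    (hbdd : BddAbove (range fun x : Icc (0:ℝ) u => |f (a * x) - h x|)) (hδ : δ ∈ Ico 0 u) :
    affineGap f δ (δ + u) ≤ ⨆ x : Icc (0:ℝ) u, |f (a * x) - h x| := by
  have ha : (0 : ℝ) < a := by exact_mod_cast (show 0 < a by omega)
  have hwin : Icc ((δ + 2 * m * u) / a) ((δ + u + 2 * m * u) / a) ⊆
      Icc (2 * (m : ℝ) * u / a) (2 * ((m + 1 : ℕ) : ℝ) * u / a) := by
    apply Icc_subset_Icc <;> gcongr <;> push_cast <;> linarith [hδ.1, hδ.2]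
  have hwin' : Icc (2 * (m : ℝ) * u / a) (2 * ((m + 1 : ℕ) : ℝ) * u / a) ⊆ Icc 0 u := by
    have hma' : 2 * ((m + 1 : ℕ) : ℝ) ≤ a := by exact_mod_cast hma
    refine Icc_subset_Icc (div_nonneg (mul_nonneg (by positivity) (hδ.1.trans hδ.2.le)) ha.le) ?_
    rw [div_le_iff₀ ha]
    nlinarith [hδ.1, hδ.2]
  obtain ⟨c, d, hcd⟩ := hh
  exact affineGap_le_of_dilation ha (by linarith [hδ.1, hδ.2])
    (by simpa [mul_assoc] using hP.nat_mul (2 * m)) ⟨c, d, fun x hx => hcd x (hwin hx)⟩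
    fun x hx => le_ciSup hbdd ⟨x, hwin' (hwin hx)⟩

theorem isBounded_image_of_affine_cover {ι : Type*} [Finite ι] {h : ℝ → ℝ} {I : ι → Set ℝ}
    (hcover : ⋃ j, I j = univ) (haff : ∀ j, ∃ c d : ℝ, ∀ x ∈ I j, h x = c * x + d)
    {s : Set ℝ} (hs : IsBounded s) : IsBounded (h '' s) := by
  choose c d hcd using haff
  refine (isBounded_iUnion.2 fun j => (hs.isCompact_closure.image
    (by fun_prop : Continuous fun x => c j * x + d j)).isBounded).subset ?_
  rintro _ ⟨x, hx, rfl⟩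
  obtain ⟨j, hj⟩ := mem_iUnion.1 (hcover ▸ mem_univ x)
  exact mem_iUnion.2 ⟨j, x, subset_closure hx, (hcd j x hj).symm⟩

theorem Function.Periodic.exists_mem_Ico₀_apply_ne {α β : Type*} [AddCommGroup α] [LinearOrder α]
    [IsOrderedAddMonoid α] [Archimedean α] {f : α → β} {c : α} (hf : Function.Periodic f c)
    (hc : 0 < c) (hnc : ∃ x y, f x ≠ f y) : ∃ p ∈ Ico 0 c, f p ≠ f 0 := by
  by_contra! hconst
  obtain ⟨x, y, hxy⟩ := hnc
  obtain ⟨x', hx', hx⟩ := hf.exists_mem_Ico₀ hc x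
  obtain ⟨y', hy', hy⟩ := hf.exists_mem_Ico₀ hc y
  exact hxy (by rw [hx, hy, hconst x' hx', hconst y' hy'])

theorem stmt13_general (f : ℝ → ℝ) (u : ℝ) (hu : 0 < u) (hf : Continuous f)
    (hper : ∀ x, f (x + u) = f x) (hnc : ∃ x y, f x ≠ f y)
    (h : ℝ → ℝ) (k : ℕ)
    (hpl : ∃ I : Fin k → Set ℝ, (⋃ j, I j) = Set.univ ∧
      ∀ j, (I j).OrdConnected ∧ ∃ c d : ℝ, ∀ x ∈ I j, h x = c * x + d)
    (a : ℕ) (hak : 2 * k < a) :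
    (0 < ⨆ δ : Set.Ico (0:ℝ) u, ⨅ c : ℝ, ⨅ d : ℝ,
        ⨆ x : Set.Icc (δ : ℝ) ((δ : ℝ) + u), |f x - (c * x + d)|) ∧
    (⨆ δ : Set.Ico (0:ℝ) u, ⨅ c : ℝ, ⨅ d : ℝ,
        ⨆ x : Set.Icc (δ : ℝ) ((δ : ℝ) + u), |f x - (c * x + d)|) ≤
      ⨆ x : Set.Icc (0:ℝ) u, |f ((a : ℝ) * x) - h x| := by
  change (0 < ⨆ δ : Ico (0:ℝ) u, affineGap f δ (δ + u)) ∧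
    (⨆ δ : Ico (0:ℝ) u, affineGap f δ (δ + u)) ≤ _
  obtain ⟨I, hcover, hI⟩ := hpl
  choose hconn haff using hI
  have hP : Function.Periodic f u := hper
  have hfb := hP.isBounded_of_continuous hu.ne' hf
  obtain ⟨M, hM⟩ := isBounded_iff_forall_norm_le.1 hfb
  have hgap : BddAbove (range fun δ : Ico (0:ℝ) u => affineGap f δ (δ + u)) :=
    ⟨M, by
      rintro _ ⟨δ, rfl⟩
      exact affineGap_le (c := 0) (d := 0) (by linarith [δ.2.1]) fun x _ => by
        simpa using hM _ (mem_range_self x)⟩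
  have herr : BddAbove (range fun x : Icc (0:ℝ) u => |f (a * x) - h x|) :=
    bddAbove_range_abs_sub (F := fun x => f (a * x))
      (hfb.subset (by rintro _ ⟨x, -, rfl⟩; exact mem_range_self _))
      (isBounded_image_of_affine_cover hcover haff (Metric.isBounded_Icc 0 u))
  have hgrid : Monotone fun m : ℕ => 2 * m * u / a := fun m n hmn => by dsimp only; gcongr
  obtain ⟨m, hm, j, hj⟩ := exists_Icc_subset_of_iUnion_eq_univ hcover hconn hgrid (n := k) (by simp)
  have : Nonempty (Ico (0:ℝ) u) := ⟨⟨0, le_rfl, hu⟩⟩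
  refine ⟨?_, ciSup_le fun δ => affineGap_le_iSup_of_affineOn (m := m) hP (by omega)
    (by obtain ⟨c, d, hcd⟩ := haff j; exact ⟨c, d, fun x hx => hcd x (hj hx)⟩) herr δ.2⟩
  obtain ⟨p, hp, hfp⟩ := hP.exists_mem_Ico₀_apply_ne hu hnc
  calc 0 < |f p - f 0| / 2 := by have := sub_ne_zero.2 hfp; positivity
    _ ≤ affineGap f 0 (0 + u) := half_abs_sub_le_affineGap hf.continuousOn
        (by rw [zero_add]; exact Ico_subset_Icc_self hp) (by rw [hper])
    _ ≤ _ := le_ciSup hgap ⟨0, le_rfl, hu⟩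

/-- Lower bound for approximating a dilated periodic function by a piecewise linear
function with few pieces.  Here `h` is piecewise linear with at most `k` pieces (ℝ is
covered by `k` intervals, i.e. order-connected sets, on each of which `h` is affine),
`a` is an even natural number with `a/2 > k`, and
`ξ(f) = sup_{δ ∈ [0,u)} inf_{c,d} sup_{x ∈ [δ,δ+u]} |f(x) − (cx+d)| > 0`.
Then `sup_{x ∈ [0,u]} |f(a·x) − h(x)| ≥ ξ(f)`. -/
theorem stmt13 (f : ℝ → ℝ) (u : ℝ) (hu : 0 < u) (hf : Continuous f)
    (hper : ∀ x, f (x + u) = f x) (hnc : ∃ x y, f x ≠ f y)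
    (h : ℝ → ℝ) (k : ℕ)
    (hpl : ∃ I : Fin k → Set ℝ, (⋃ j, I j) = Set.univ ∧
      ∀ j, (I j).OrdConnected ∧ ∃ c d : ℝ, ∀ x ∈ I j, h x = c * x + d)
    (a : ℕ) (ha : Even a) (hak : 2 * k < a) :
    (0 < ⨆ δ : Set.Ico (0:ℝ) u, ⨅ c : ℝ, ⨅ d : ℝ,
        ⨆ x : Set.Icc (δ : ℝ) ((δ : ℝ) + u), |f x - (c * x + d)|) ∧
    (⨆ δ : Set.Ico (0:ℝ) u, ⨅ c : ℝ, ⨅ d : ℝ,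
        ⨆ x : Set.Icc (δ : ℝ) ((δ : ℝ) + u), |f x - (c * x + d)|) ≤
      ⨆ x : Set.Icc (0:ℝ) u, |f ((a : ℝ) * x) - h x| :=
  stmt13_general f u hu hf hper hnc h k hpl a hak
end

section
/- Let g₁(x) = 2·max(x,0) − 4·max(x − 1/2, 0) + 2·max(x − 1, 0) (the hat function) and define g_s by iterated composition g_{s+1} = g₁ ∘ g_s. Then for every s ∈ ℕ, the function g_s restricted to [0,1] is piecewise linear with exactly 2^s pieces: it is affine on each interval [j·2^{−s}, (j+1)·2^{−s}], j = 0,…,2^s − 1, taking the value 0 at points j·2^{−s} with j even and the value 1 at points j·2^{−s} with j odd. -/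
lemma hatg_of_le_half_s14 {x : ℝ} (h₀ : 0 ≤ x) (h : x ≤ 1 / 2) : hatg x = 2 * x := by
  rw [hatg, max_eq_left h₀, max_eq_right (by linarith), max_eq_right (by linarith)]
  ring

lemma hatg_of_half_le_s14 {x : ℝ} (h : 1 / 2 ≤ x) (h₁ : x ≤ 1) : hatg x = 2 - 2 * x := by
  rw [hatg, max_eq_left (by linarith), max_eq_left (by linarith), max_eq_right (by linarith)]
  ring

lemma iterate_hatg_dyadic (s : ℕ) {j : ℕ} (hj : j < 2 ^ s) {t : ℝ} (ht : t ∈ Set.Icc 0 1) :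
    hatg^[s] ((j + t) / 2 ^ s) = if Even j then t else 1 - t := by
  induction s generalizing j t with
  | zero =>
    obtain rfl : j = 0 := by simpa using hj
    simp
  | succ s ih =>
    obtain ⟨ht₀, ht₁⟩ := ht
    have hpow : (2 : ℝ) ^ (s + 1) = 2 * 2 ^ s := by ring
    rw [Function.iterate_succ_apply]
    by_cases hjs : j < 2 ^ s
    · have hj' : (j : ℝ) + 1 ≤ 2 ^ s := by exact_mod_cast hjs
      have hhalf : (j + t) / 2 ^ (s + 1) ≤ 1 / 2 := by
        rw [hpow, div_le_iff₀ (by positivity)]; linarith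
      rw [hatg_of_le_half_s14 (by positivity) hhalf, ← ih hjs ⟨ht₀, ht₁⟩, hpow]
      field_simp
    · obtain ⟨j', hj'⟩ : ∃ j', j' + j + 1 = 2 ^ (s + 1) := ⟨2 ^ (s + 1) - 1 - j, by omega⟩
      have hj's : j' < 2 ^ s := by rw [pow_succ] at hj'; omega
      have hj'R : (j' : ℝ) + j + 1 = 2 * 2 ^ s := by rw [← hpow]; exact_mod_cast hj'
      have hjR : (2 : ℝ) ^ s ≤ j := by exact_mod_cast not_lt.mp hjs
      have hhalf : 1 / 2 ≤ (j + t) / 2 ^ (s + 1) := by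
        rw [hpow, le_div_iff₀ (by positivity)]; linarith
      have hone : (j + t) / 2 ^ (s + 1) ≤ 1 := by
        rw [hpow, div_le_iff₀ (by positivity)]; linarith
      have hreflect : 2 - 2 * ((j + t) / 2 ^ (s + 1)) = (j' + (1 - t)) / 2 ^ s := by
        rw [hpow]; field_simp; linarith
      have hparity : Even j' ↔ ¬ Even j := by
        have : Even (j' + j + 1) := hj' ▸ (Nat.even_pow.mpr ⟨even_two, by omega⟩)
        grind
      rw [hatg_of_half_le_s14 hhalf hone, hreflect, ih hj's ⟨by linarith, by linarith⟩]
      by_cases he : Even j <;> simp [hparity, he]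

lemma iterate_hatg_of_mem_Icc (s : ℕ) {j : ℕ} (hj : j < 2 ^ s) {x : ℝ}
    (hx : x ∈ Set.Icc ((j : ℝ) / 2 ^ s) ((j + 1) / 2 ^ s)) :
    hatg^[s] x = if Even j then 2 ^ s * x - j else j + 1 - 2 ^ s * x := by
  have h2s : (0 : ℝ) < 2 ^ s := by positivity
  obtain ⟨hx₀, hx₁⟩ := hx
  rw [div_le_iff₀ h2s] at hx₀
  rw [le_div_iff₀ h2s] at hx₁
  have hx : x = (j + (2 ^ s * x - j)) / 2 ^ s := by field_simp; ring
  rw [hx, iterate_hatg_dyadic s hj ⟨by linarith, by linarith⟩, ← hx]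
  split_ifs <;> ring

lemma iterate_hatg_grid (s : ℕ) {j : ℕ} (hj : j ≤ 2 ^ s) :
    hatg^[s] ((j : ℝ) / 2 ^ s) = if Even j then 0 else 1 := by
  cases j with
  | zero => simpa using iterate_hatg_dyadic s (Nat.two_pow_pos s) (t := 0) ⟨le_rfl, zero_le_one⟩
  | succ k =>
    rw [Nat.cast_succ, iterate_hatg_dyadic s hj ⟨zero_le_one, le_rfl⟩]
    by_cases he : Even k <;> simp [he, Nat.even_add_one]

theorem stmt14_general (s : ℕ) :
    (∀ j : ℕ, j < 2 ^ s → ∃ c d : ℝ,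
      ∀ x ∈ Set.Icc ((j : ℝ) / 2 ^ s) (((j : ℝ) + 1) / 2 ^ s),
        hatg^[s] x = c * x + d) ∧
    (∀ j : ℕ, j ≤ 2 ^ s →
      (Even j → hatg^[s] ((j : ℝ) / 2 ^ s) = 0) ∧
      (Odd j → hatg^[s] ((j : ℝ) / 2 ^ s) = 1)) := by
  refine ⟨fun j hj => ?_, fun j hj => ?_⟩
  · by_cases he : Even j
    · exact ⟨2 ^ s, -j, fun x hx => by rw [iterate_hatg_of_mem_Icc s hj hx, if_pos he]; ring⟩
    · exact ⟨-2 ^ s, j + 1, fun x hx => by rw [iterate_hatg_of_mem_Icc s hj hx, if_neg he]; ring⟩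
  · rw [iterate_hatg_grid s hj]
    exact ⟨fun he => if_pos he, fun ho => if_neg (Nat.not_even_iff_odd.mpr ho)⟩

/-- For every `s ≥ 1`, the `s`-fold composition `g_s` of the hat function is, on `[0,1]`,
piecewise linear with `2^s` pieces: it is affine on each dyadic interval
`[j·2^{−s}, (j+1)·2^{−s}]`, takes the value `0` at grid points `j·2^{−s}` with `j` even,
and the value `1` at grid points with `j` odd. -/
theorem stmt14 (s : ℕ) (hs : 1 ≤ s) :
    (∀ j : ℕ, j < 2 ^ s → ∃ c d : ℝ,
      ∀ x ∈ Set.Icc ((j : ℝ) / 2 ^ s) (((j : ℝ) + 1) / 2 ^ s),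
        hatg^[s] x = c * x + d) ∧
    (∀ j : ℕ, j ≤ 2 ^ s →
      (Even j → hatg^[s] ((j : ℝ) / 2 ^ s) = 0) ∧
      (Odd j → hatg^[s] ((j : ℝ) / 2 ^ s) = 1)) :=
  stmt14_general s
end

section
/- For u > 0 and an even natural number a with a ≥ 2, if a function h : [0,u] → ℝ is affine on some interval [u₁, u₂] ⊆ [0,u] with u₂ − u₁ ≥ 2u/a, then inf over affine functions ℓ of sup_{x ∈ [u₁,u₂]} |f(a·x) − ℓ(x)| ≥ inf over affine functions ℓ of sup_{y ∈ [0, 2u]} |f(y) − ℓ(y)|, for any u-periodic continuous f : ℝ → ℝ. -/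
/-!
Write `ℓ x = c x + d`. The function `g x = f (a x)` is `u / a`-periodic, and `[u₁, u₂]` contains
two of its periods `[u₁, u₁ + 2u/a]`. Every value `g y` is taken at some `x₁` in the first period
and again at `x₂ = x₁ + u/a` in the second; since `m = u₁ + u/a` lies between `x₁` and `x₂`,
the affine value `ℓ m` lies between `ℓ x₁` and `ℓ x₂`, so `|g y - ℓ m|` is at most the error of
`ℓ` on `[u₁, u₂]`. Hence `f` is approximated on all of `ℝ` by the constant `ℓ m`, itself an
affine function, at least as well as `g` is approximated by `ℓ` on `[u₁, u₂]`.
-/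

open Set

theorem abs_sub_affine_le_max {z c d x₁ x₂ x : ℝ} (hx : x ∈ Icc x₁ x₂) :
    |z - (c * x + d)| ≤ max |z - (c * x₁ + d)| |z - (c * x₂ + d)| := by
  rcases le_total 0 c with hc | hc
  · rw [max_comm]
    exact abs_le_max_abs_abs (by nlinarith [hx.2]) (by nlinarith [hx.1])
  · exact abs_le_max_abs_abs (by nlinarith [hx.1]) (by nlinarith [hx.2])

theorem Function.Periodic.abs_sub_const_le_of_abs_sub_affine_le {g : ℝ → ℝ} {p s c d S : ℝ}
    (hg : Periodic g p) (hp : 0 < p) (hS : ∀ x ∈ Icc s (s + 2 * p), |g x - (c * x + d)| ≤ S)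
    (y : ℝ) : |g y - (c * (s + p) + d)| ≤ S := by
  obtain ⟨x, hx, hxy⟩ : ∃ x ∈ Ico s (s + p), g y = g x := hg.exists_mem_Ico hp y s
  rw [hxy]
  have h₁ : |g x - (c * x + d)| ≤ S := hS x ⟨hx.1, by linarith [hx.2]⟩
  have h₂ : |g x - (c * (x + p) + d)| ≤ S := by
    simpa only [hg x] using hS (x + p) ⟨by linarith [hx.1], by linarith [hx.2]⟩
  exact (abs_sub_affine_le_max ⟨hx.2.le, by linarith [hx.1]⟩).trans (max_le h₁ h₂)

theorem ciInf_ciInf_le {α ι κ : Type*} [ConditionallyCompleteLattice α] [Nonempty κ]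
    {F : ι → κ → α} {b : α} (hF : ∀ i j, b ≤ F i j) (i : ι) (j : κ) :
    ⨅ i, ⨅ j, F i j ≤ F i j :=
  (ciInf_le ⟨b, forall_mem_range.2 fun i => le_ciInf (hF i)⟩ i).trans
    (ciInf_le ⟨b, forall_mem_range.2 (hF i)⟩ j)

theorem stmt17_general (f : ℝ → ℝ) (u : ℝ) (hu : 0 < u) (hf : Continuous f)
    (hper : ∀ x, f (x + u) = f x)
    (a : ℕ) (ha2 : 2 ≤ a)
    (u₁ u₂ : ℝ)
    (hlen : 2 * u / (a : ℝ) ≤ u₂ - u₁) :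
    (⨅ c : ℝ, ⨅ d : ℝ, ⨆ y : Set.Icc (0:ℝ) (2 * u), |f y - (c * y + d)|) ≤
      ⨅ c : ℝ, ⨅ d : ℝ, ⨆ x : Set.Icc u₁ u₂, |f ((a : ℝ) * x) - (c * x + d)| := by
  have ha : (0 : ℝ) < a := by positivity
  have htwo : u₁ + 2 * ((a : ℝ)⁻¹ * u) ≤ u₂ := by
    rw [div_eq_inv_mul, mul_left_comm] at hlen
    linarith
  refine le_ciInf fun c => le_ciInf fun d => ?_
  have hS : ∀ x ∈ Icc u₁ (u₁ + 2 * ((a : ℝ)⁻¹ * u)), |f (a * x) - (c * x + d)| ≤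
      ⨆ x : Icc u₁ u₂, |f (a * x) - (c * x + d)| := fun x hx =>
    le_ciSup (f := fun x : Icc u₁ u₂ => |f (a * x) - (c * x + d)|)
      (isCompact_range (by fun_prop)).bddAbove ⟨x, hx.1, hx.2.trans htwo⟩
  have hconst := (Function.Periodic.const_mul hper (a : ℝ)).abs_sub_const_le_of_abs_sub_affine_le
    (by positivity) hS
  calc _ ≤ ⨆ y : Icc (0 : ℝ) (2 * u), |f y - (0 * y + (c * (u₁ + (a : ℝ)⁻¹ * u) + d))| :=
        ciInf_ciInf_le (fun _ _ => Real.iSup_nonneg fun _ => abs_nonneg _) _ _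
    _ ≤ _ := Real.iSup_le (fun y => by
        simpa only [zero_mul, zero_add, mul_inv_cancel_left₀ ha.ne'] using hconst ((a : ℝ)⁻¹ * y))
        (Real.iSup_nonneg fun _ => abs_nonneg _)

/-- If `f` is `u`-periodic and continuous, `a` is an even natural number with `a ≥ 2`,
and `h` is affine on an interval `[u₁,u₂] ⊆ [0,u]` of length at least `2u/a`, then the
best affine approximation error of `x ↦ f(a·x)` on `[u₁,u₂]` is at least the best affine
approximation error of `f` on `[0,2u]`. -/
theorem stmt17 (f : ℝ → ℝ) (u : ℝ) (hu : 0 < u) (hf : Continuous f)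
    (hper : ∀ x, f (x + u) = f x)
    (a : ℕ) (ha : Even a) (ha2 : 2 ≤ a)
    (h : ℝ → ℝ) (u₁ u₂ : ℝ) (hsub : Set.Icc u₁ u₂ ⊆ Set.Icc 0 u)
    (hlen : 2 * u / (a : ℝ) ≤ u₂ - u₁)
    (haff : ∃ c d : ℝ, ∀ x ∈ Set.Icc u₁ u₂, h x = c * x + d) :
    (⨅ c : ℝ, ⨅ d : ℝ, ⨆ y : Set.Icc (0:ℝ) (2 * u), |f y - (c * y + d)|) ≤
      ⨅ c : ℝ, ⨅ d : ℝ, ⨆ x : Set.Icc u₁ u₂, |f ((a : ℝ) * x) - (c * x + d)| :=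
  stmt17_general f u hu hf hper a ha2 u₁ u₂ hlen
end

section
/- Let m ∈ ℕ, m ≥ 2, and let ψ_m(x) = (1/2^{m−1}) · ∑_{j=0}^{2m−2} (−1)^j · N_{2m}(j+1) · (d^m/dx^m) N_{2m}(2x − j), where N_k denotes the cardinal B-spline of order k. Then ψ_m can be written as ψ_m(x) = ∑_{n=1}^{3m−1} q_n · N_m(2x − n + 1) with q_n = ((−1)^{n+1}/2^{m−1}) · ∑_{j=0}^{m} C(m,j) · N_{2m}(n − j), using the identity (d^m/dx^m) N_{2m}(x) = ∑_{j=0}^{m} (−1)^j · C(m,j) · N_m(x − j). -/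
open MeasureTheory

/-- The cardinal B-splines: `N₁ = χ_{[0,1]}` and `N_{m+1} = N₁ * N_m` (convolution).
The value at index `0` is a dummy. -/
noncomputable def Bspline : ℕ → ℝ → ℝ
  | 0 => fun _ => 0
  | 1 => fun x => if x ∈ Set.Icc (0:ℝ) 1 then 1 else 0
  | (m + 2) => fun x =>
      ∫ t, (if t ∈ Set.Icc (0:ℝ) 1 then (1:ℝ) else 0) * Bspline (m + 1) (x - t)

/-!
Since `N_{n+1}(x) = ∫_{x-1}^x N_n`, the fundamental theorem of calculus gives
`N_{n+1}' = N_n - N_n(· - 1)` once `N_n` is continuous (`n ≥ 2`); iterating `m` times produces the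
`m`-th backward difference of `N_m`, whence the binomial identity for `N_{2m}^{(m)}`. Substituting it
into `ψ_m` and putting `n = j + i + 1` gives the claimed double sum: the additional terms with
`1 ≤ n ≤ 3m - 1` vanish because `N_{2m}` is zero at the integers outside `(0, 2m)`.
-/

open Set intervalIntegral

section SlidingIntegral

variable {f : ℝ → ℝ} (a : ℝ)

lemma integral_sub_right_eq_sub_primitive (hf : ∀ b c, IntervalIntegrable f volume b c) (x : ℝ) :
    ∫ t in (x - a)..x, f t = (∫ t in (0 : ℝ)..x, f t) - ∫ t in (0 : ℝ)..(x - a), f t :=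
  (integral_interval_sub_left (hf 0 x) (hf 0 (x - a))).symm

lemma continuous_integral_sub_right (hf : ∀ b c, IntervalIntegrable f volume b c) :
    Continuous fun x => ∫ t in (x - a)..x, f t := by
  simp_rw [integral_sub_right_eq_sub_primitive a hf]
  have hF := continuous_primitive hf 0
  exact hF.sub (hF.comp (continuous_sub_right a))

lemma hasDerivAt_integral_sub_right (hf : Continuous f) (x : ℝ) :
    HasDerivAt (fun y => ∫ t in (y - a)..y, f t) (f x - f (x - a)) x := by
  simp_rw [integral_sub_right_eq_sub_primitive a hf.intervalIntegrable]
  have hF (y : ℝ) := (hf.integral_hasStrictDerivAt 0 y).hasDerivAt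
  exact (hF x).sub ((hF (x - a)).comp_sub_const x a)

end SlidingIntegral

lemma integrable_Bspline_one : Integrable (Bspline 1) := by
  have : Bspline 1 = (Icc (0 : ℝ) 1).indicator 1 := by
    ext x
    simp [Bspline, indicator]
  rw [this, integrable_indicator_iff measurableSet_Icc]
  exact integrableOn_const (by simp [Real.volume_Icc]) (by simp)

lemma Bspline_succ {n : ℕ} (hn : 1 ≤ n) (x : ℝ) :
    Bspline (n + 1) x = ∫ t in (x - 1)..x, Bspline n t := by
  obtain ⟨k, rfl⟩ : ∃ k, n = k + 1 := ⟨n - 1, by omega⟩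
  have hind : Bspline (k + 2) x = ∫ t in Icc (0 : ℝ) 1, Bspline (k + 1) (x - t) := by
    show ∫ t, (if t ∈ Icc (0 : ℝ) 1 then (1 : ℝ) else 0) * Bspline (k + 1) (x - t) = _
    rw [← MeasureTheory.integral_indicator measurableSet_Icc]
    congr 1 with t
    by_cases ht : t ∈ Icc (0 : ℝ) 1 <;> simp [ht]
  rw [hind, integral_Icc_eq_integral_Ioc, ← integral_of_le zero_le_one,
    integral_comp_sub_left (Bspline (k + 1)) x]
  simp

lemma continuous_Bspline {n : ℕ} (hn : 2 ≤ n) : Continuous (Bspline n) := by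
  induction n, hn using Nat.le_induction with
  | base =>
    rw [show (2 : ℕ) = 1 + 1 from rfl, funext (Bspline_succ le_rfl)]
    exact continuous_integral_sub_right 1 fun b c => integrable_Bspline_one.intervalIntegrable
  | succ n hn ih =>
    rw [funext (Bspline_succ (by omega))]
    exact continuous_integral_sub_right 1 ih.intervalIntegrable

lemma hasDerivAt_Bspline {n : ℕ} (hn : 2 ≤ n) (x : ℝ) :
    HasDerivAt (Bspline (n + 1)) (Bspline n x - Bspline n (x - 1)) x := by
  rw [funext (Bspline_succ (by omega))]
  exact hasDerivAt_integral_sub_right 1 (continuous_Bspline hn) x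

lemma Bspline_eq_zero_of_notMem_Icc {n : ℕ} (hn : 1 ≤ n) {x : ℝ} (hx : x ∉ Icc 0 (n : ℝ)) :
    Bspline n x = 0 := by
  induction n, hn using Nat.le_induction generalizing x with
  | base => simp_all [Bspline]
  | succ n hn ih =>
    rw [Bspline_succ hn, integral_congr (g := fun _ => 0)]
    · simp
    intro t ht
    rw [uIcc_of_le (by linarith)] at ht
    refine ih fun ⟨h0, hle⟩ => hx ⟨by linarith [ht.2], ?_⟩
    push_cast
    linarith [ht.1]

lemma Bspline_eq_zero_of_notMem_Ioo {n : ℕ} (hn : 2 ≤ n) {x : ℝ} (hx : x ∉ Ioo 0 (n : ℝ)) :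
    Bspline n x = 0 := by
  have hout : EqOn (Bspline n) 0 (Icc 0 (n : ℝ))ᶜ := fun y hy =>
    Bspline_eq_zero_of_notMem_Icc (by omega) hy
  have hclosure := hout.closure (continuous_Bspline hn) continuous_zero
  rw [closure_compl, interior_Icc] at hclosure
  exact hclosure hx

lemma sum_range_alternating_choose_succ {R : Type*} [CommRing R] (g : R → R) (i : ℕ) (x : R) :
    ∑ j ∈ Finset.range (i + 2), (-1 : R) ^ j * ((i + 1).choose j : R) * g (x - j) =
      ∑ j ∈ Finset.range (i + 1), (-1 : R) ^ j * (i.choose j : R) * (g (x - j) - g (x - j - 1)) := by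
  have pascal := Finset.sum_choose_succ_mul (fun j _ => (-1 : R) ^ j * g (x - j)) i
  simp only [mul_sub, Finset.sum_sub_distrib, ← mul_assoc, mul_comm _ ((-1 : R) ^ _)] at pascal ⊢
  rw [pascal, sub_eq_add_neg, ← Finset.sum_neg_distrib]
  congr 1
  refine Finset.sum_congr rfl fun j _ => ?_
  rw [Nat.cast_succ, ← sub_sub, pow_succ]
  ring

lemma iteratedDeriv_Bspline_add (i : ℕ) {n : ℕ} (hn : 2 ≤ n) (x : ℝ) :
    iteratedDeriv i (Bspline (n + i)) x =
      ∑ j ∈ Finset.range (i + 1), (-1 : ℝ) ^ j * (i.choose j : ℝ) * Bspline n (x - j) := by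
  induction i generalizing n x with
  | zero => simp
  | succ i ih =>
    have hderiv : HasDerivAt (fun y => ∑ j ∈ Finset.range (i + 1),
          (-1 : ℝ) ^ j * (i.choose j : ℝ) * Bspline (n + 1) (y - j))
        (∑ j ∈ Finset.range (i + 1),
          (-1 : ℝ) ^ j * (i.choose j : ℝ) * (Bspline n (x - j) - Bspline n (x - j - 1))) x :=
      HasDerivAt.fun_sum fun j _ =>
        ((hasDerivAt_Bspline hn (x - j)).comp_sub_const x (j : ℝ)).const_mul _
    rw [iteratedDeriv_succ, show n + (i + 1) = n + 1 + i by ring, funext (ih (by omega)),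
      hderiv.deriv, sum_range_alternating_choose_succ]

lemma sum_Icc_Bspline_natCast_sub_mul {n : ℕ} (hn : 2 ≤ n) {i N : ℕ} (hN : i + n - 1 ≤ N)
    (h : ℕ → ℝ) :
    ∑ l ∈ Finset.Icc 1 N, Bspline n ((l : ℝ) - i) * h l =
      ∑ j ∈ Finset.range (n - 1), Bspline n ((j : ℝ) + 1) * h (i + 1 + j) := by
  have hsupp : ∑ l ∈ Finset.Icc 1 N, Bspline n ((l : ℝ) - i) * h l =
      ∑ l ∈ Finset.Ico (i + 1) (i + n), Bspline n ((l : ℝ) - i) * h l := by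
    refine (Finset.sum_subset (fun l hl => ?_) fun l _ hl' => ?_).symm
    · simp only [Finset.mem_Ico, Finset.mem_Icc] at hl ⊢
      omega
    · refine mul_eq_zero_of_left (Bspline_eq_zero_of_notMem_Ioo hn fun ⟨hpos, hlt⟩ => hl' ?_) _
      have hil : (i : ℝ) < l := by linarith
      have hli : (l : ℝ) < i + n := by linarith
      exact Finset.mem_Ico.mpr ⟨by exact_mod_cast hil, by exact_mod_cast hli⟩
  rw [hsupp, Finset.sum_Ico_eq_sum_range, show i + n - (i + 1) = n - 1 by omega]
  refine Finset.sum_congr rfl fun j _ => ?_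
  push_cast
  ring_nf

/-- The Chui–Wang spline wavelet
`ψ_m(x) = (1/2^{m−1}) ∑_{j=0}^{2m−2} (−1)^j N_{2m}(j+1) (d^m/dx^m)N_{2m}(2x−j)`
can be written as `ψ_m(x) = ∑_{n=1}^{3m−1} q_n N_m(2x−n+1)` with
`q_n = ((−1)^{n+1}/2^{m−1}) ∑_{j=0}^{m} C(m,j) N_{2m}(n−j)`, using the identity
`(d^m/dx^m) N_{2m}(x) = ∑_{j=0}^{m} (−1)^j C(m,j) N_m(x−j)`. -/
theorem stmt19 (m : ℕ) (hm : 2 ≤ m) :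
    (∀ x : ℝ, iteratedDeriv m (Bspline (2 * m)) x =
      ∑ j ∈ Finset.range (m + 1),
        (-1 : ℝ) ^ j * (Nat.choose m j : ℝ) * Bspline m (x - (j : ℝ))) ∧
    (∀ x : ℝ,
      (1 / 2 ^ (m - 1) : ℝ) *
          ∑ j ∈ Finset.range (2 * m - 1),
            (-1 : ℝ) ^ j * Bspline (2 * m) ((j : ℝ) + 1) *
              iteratedDeriv m (Bspline (2 * m)) (2 * x - (j : ℝ)) =
        ∑ n ∈ Finset.Icc 1 (3 * m - 1),
          (((-1 : ℝ) ^ (n + 1) / 2 ^ (m - 1)) *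
              ∑ j ∈ Finset.range (m + 1),
                (Nat.choose m j : ℝ) * Bspline (2 * m) ((n : ℝ) - (j : ℝ))) *
            Bspline m (2 * x - (n : ℝ) + 1)) := by
  have hderiv (x : ℝ) := two_mul m ▸ iteratedDeriv_Bspline_add m hm x
  refine ⟨hderiv, fun x => ?_⟩
  have hreindex (i : ℕ) (hi : i ∈ Finset.range (m + 1)) :=
    sum_Icc_Bspline_natCast_sub_mul (n := 2 * m) (by omega) (i := i) (N := 3 * m - 1)
      (by rw [Finset.mem_range] at hi; omega)
      fun l => (-1 : ℝ) ^ (l + 1) / 2 ^ (m - 1) * Bspline m (2 * x - l + 1)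
  simp only [hderiv, Finset.mul_sum, Finset.sum_mul]
  rw [Finset.sum_comm, Finset.sum_comm (s := Finset.Icc _ _)]
  refine Finset.sum_congr rfl fun i hi => ?_
  calc _ = (m.choose i : ℝ) * ∑ j ∈ Finset.range (2 * m - 1), Bspline (2 * m) ((j : ℝ) + 1) *
        ((-1 : ℝ) ^ (i + 1 + j + 1) / 2 ^ (m - 1) * Bspline m (2 * x - (i + 1 + j : ℕ) + 1)) := by
        rw [Finset.mul_sum]
        refine Finset.sum_congr rfl fun j _ => ?_
        rw [show 2 * x - ((i + 1 + j : ℕ) : ℝ) + 1 = 2 * x - j - i by push_cast; ring]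
        ring
    _ = _ := by
        rw [← hreindex i hi, Finset.mul_sum]
        refine Finset.sum_congr rfl fun l _ => ?_
        ring
end
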